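/- Let (X, d) be a complete separable metric space and μᵢ a sequence of probability measures on X converging weakly to μ_∞ and satisfying Var(μᵢ) ≤ C < ∞ for all i. Then μᵢ → μ_∞ in the 1-Wasserstein distance. -/

import Mathlib

/-!
Weak convergence and the uniform variance bound give second moments about a base point `x₀`
that are eventually uniformly bounded, for the `μᵢ` and (by lower semicontinuity) for `μ_∞`.
Cut `X` into countably many pieces `A k` of diameter at most `ε` whose boundaries are
`μ_∞`-null. On `A 0, …, A (n-1)` couple `μᵢ` with `μ_∞` through products of the restrictions,
of mass `min (μᵢ (A k)) (μ_∞ (A k))`, and couple what is left by an independent product. The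
first part costs at most `ε`. By the portmanteau theorem the leftover mass tends to
`1 - μ_∞ (A 0 ∪ … ∪ A (n-1))`, which is small for large `n`, and since `d ≤ R + d² / R` the
leftover costs at most `2 R` times its mass plus the second moments divided by `R`.
-/

open scoped ENNReal

open MeasureTheory Filter

/-- The variance between two measures on a metric space:
`Var(μ, ν) = ∫∫ d²(x, y) dμ(x) dν(y)` (valued in `ℝ≥0∞`, may be `∞`). -/
noncomputable def Var {X : Type*} [MetricSpace X] [MeasurableSpace X]
    (μ ν : Measure X) : ℝ≥0∞ :=
  ∫⁻ x, ∫⁻ y, edist x y ^ 2 ∂ν ∂μ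

/-- The 1-Wasserstein distance: the infimum of `∫ d(x, y) dq(x, y)` over all
couplings `q` of `μ` and `ν` (valued in `ℝ≥0∞`, may be `∞`). -/
noncomputable def W1 {X : Type*} [MetricSpace X] [MeasurableSpace X]
    (μ ν : Measure X) : ℝ≥0∞ :=
  ⨅ (q : Measure (X × X)) (_ : q.map Prod.fst = μ ∧ q.map Prod.snd = ν),
    ∫⁻ p, edist p.1 p.2 ∂q

open scoped NNReal

open Set Metric Function

lemma ENNReal.div_mul_mul_le_one {t a : ℝ≥0∞} (h : t ≤ a) (b : ℝ≥0∞) : t / (a * b) * b ≤ 1 := by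
  rw [← ENNReal.mul_div_right_comm]
  exact ENNReal.div_le_of_le_mul (by rw [one_mul]; exact mul_le_mul_left h b)

lemma ENNReal.add_sq_le (a b : ℝ≥0∞) : (a + b) ^ 2 ≤ 2 * (a ^ 2 + b ^ 2) := by
  rcases eq_or_ne a ⊤ with rfl | ha
  · simp
  rcases eq_or_ne b ⊤ with rfl | hb
  · simp
  lift a to ℝ≥0 using ha
  lift b to ℝ≥0 using hb
  exact_mod_cast _root_.add_sq_le (a := a) (b := b)

lemma ENNReal.le_add_sq_div (a R : ℝ≥0∞) : a ≤ R + a ^ 2 / R := by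
  rcases le_or_gt a R with h | h
  · exact le_add_right h
  refine le_add_left ((ENNReal.le_div_iff_mul_le (Or.inr (pow_ne_zero 2 h.ne_bot))
    (Or.inl h.ne_top)).2 ?_)
  rw [sq]
  exact mul_le_mul_right h.le a

section Overlap

variable {X : Type*} [MeasurableSpace X]

theorem MeasureTheory.Measure.smul_le_self {c : ℝ≥0∞} (hc : c ≤ 1) (μ : Measure X) : c • μ ≤ μ :=
  Measure.le_iff'.2 fun s => by simpa using mul_le_of_le_one_left (by positivity) hc

theorem MeasureTheory.Measure.inv_smul_smul_measure_univ (ρ : Measure X) [IsFiniteMeasure ρ] :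
    (ρ univ)⁻¹ • ρ univ • ρ = ρ := by
  rcases eq_or_ne (ρ univ) 0 with h | h
  · simp [Measure.measure_univ_eq_zero.1 h]
  · rw [smul_smul, ENNReal.inv_mul_cancel h (measure_ne_top _ _), one_smul]

theorem MeasureTheory.Measure.finsetSum_restrict_le {ι : Type*} (μ : Measure X) {s : Finset ι}
    {A : ι → Set X} (hA : ∀ k, MeasurableSet (A k)) (hd : (s : Set ι).PairwiseDisjoint A) :
    ∑ k ∈ s, μ.restrict (A k) ≤ μ := by
  rw [← Measure.sum_coe_finset, ← Measure.restrict_biUnion_finset hd hA]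
  exact Measure.restrict_le_self

noncomputable def overlapProd (μ ν : Measure X) (A : Set X) : Measure (X × X) :=
  (min (μ A) (ν A) / (μ A * ν A)) • (μ.restrict A).prod (ν.restrict A)

variable (μ ν : Measure X)

theorem overlapProd_apply_univ [IsFiniteMeasure μ] [IsFiniteMeasure ν] (A : Set X) :
    overlapProd μ ν A univ = min (μ A) (ν A) := by
  rw [overlapProd, Measure.smul_apply, ← univ_prod_univ, Measure.prod_prod,
    Measure.restrict_apply_univ, Measure.restrict_apply_univ, smul_eq_mul]
  rcases eq_or_ne (μ A * ν A) 0 with h | h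
  · rcases mul_eq_zero.1 h with h | h <;> simp [h]
  · exact ENNReal.div_mul_cancel h (ENNReal.mul_ne_top (measure_ne_top _ _) (measure_ne_top _ _))

theorem map_fst_overlapProd_le [SFinite ν] (A : Set X) :
    (overlapProd μ ν A).map Prod.fst ≤ μ.restrict A := by
  rw [overlapProd, Measure.map_smul, Measure.map_fst_prod, Measure.restrict_apply_univ, smul_smul]
  exact Measure.smul_le_self (ENNReal.div_mul_mul_le_one (min_le_left _ _) _) _

theorem map_snd_overlapProd_le [SFinite μ] [SFinite ν] (A : Set X) :
    (overlapProd μ ν A).map Prod.snd ≤ ν.restrict A := by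
  rw [overlapProd, Measure.map_smul, Measure.map_snd_prod, Measure.restrict_apply_univ, smul_smul,
    mul_comm (μ A)]
  exact Measure.smul_le_self (ENNReal.div_mul_mul_le_one (min_le_right _ _) _) _

theorem map_fst_sum_overlapProd_le [SFinite ν] {ι : Type*} {s : Finset ι} {A : ι → Set X}
    (hA : ∀ k, MeasurableSet (A k)) (hd : (s : Set ι).PairwiseDisjoint A) :
    (∑ k ∈ s, overlapProd μ ν (A k)).map Prod.fst ≤ μ := by
  rw [Measure.map_finset_sum measurable_fst.aemeasurable]
  exact (Finset.sum_le_sum fun k _ => map_fst_overlapProd_le μ ν (A k)).trans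
    (μ.finsetSum_restrict_le hA hd)

theorem map_snd_sum_overlapProd_le [SFinite μ] [SFinite ν] {ι : Type*} {s : Finset ι}
    {A : ι → Set X} (hA : ∀ k, MeasurableSet (A k)) (hd : (s : Set ι).PairwiseDisjoint A) :
    (∑ k ∈ s, overlapProd μ ν (A k)).map Prod.snd ≤ ν := by
  rw [Measure.map_finset_sum measurable_snd.aemeasurable]
  exact (Finset.sum_le_sum fun k _ => map_snd_overlapProd_le μ ν (A k)).trans
    (ν.finsetSum_restrict_le hA hd)

theorem lintegral_edist_overlapProd_le [IsFiniteMeasure μ] [IsFiniteMeasure ν]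
    [PseudoEMetricSpace X] {A : Set X} (hA : MeasurableSet A) {ε : ℝ≥0∞} (hε : ediam A ≤ ε) :
    ∫⁻ p, edist p.1 p.2 ∂overlapProd μ ν A ≤ ε * min (μ A) (ν A) := by
  have hmem : ∀ᵐ p ∂overlapProd μ ν A, p ∈ A ×ˢ A := by
    refine Measure.ae_smul_measure ?_ _
    rw [Measure.prod_restrict]
    exact ae_restrict_mem (hA.prod hA)
  calc ∫⁻ p, edist p.1 p.2 ∂overlapProd μ ν A ≤ ∫⁻ _, ε ∂overlapProd μ ν A :=
        lintegral_mono_ae (hmem.mono fun p hp => edist_le_of_ediam_le hp.1 hp.2 hε)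
    _ = ε * min (μ A) (ν A) := by rw [lintegral_const, overlapProd_apply_univ]

end Overlap

section Glue

variable {X : Type*} [MetricSpace X] [MeasurableSpace X]

theorem W1_le_lintegral {μ ν : Measure X} {q : Measure (X × X)}
    (h₁ : q.map Prod.fst = μ) (h₂ : q.map Prod.snd = ν) : W1 μ ν ≤ ∫⁻ p, edist p.1 p.2 ∂q :=
  iInf₂_le q ⟨h₁, h₂⟩

variable [OpensMeasurableSpace X]

theorem lintegral_edist_prod_le (α β : Measure X) [SFinite α] [SFinite β] (x₀ : X) :
    ∫⁻ p, edist p.1 p.2 ∂α.prod β ≤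
      β univ * ∫⁻ x, edist x x₀ ∂α + α univ * ∫⁻ y, edist y x₀ ∂β := by
  have hd : Measurable fun x => edist x x₀ := (continuous_id.edist continuous_const).measurable
  calc ∫⁻ p, edist p.1 p.2 ∂α.prod β ≤ ∫⁻ p, edist p.1 x₀ + edist p.2 x₀ ∂α.prod β :=
        lintegral_mono fun p => edist_triangle_right _ _ _
    _ = β univ * ∫⁻ x, edist x x₀ ∂α + α univ * ∫⁻ y, edist y x₀ ∂β := by
      rw [lintegral_add_left (f := fun p : X × X => edist p.1 x₀) (hd.comp measurable_fst),
        ← lintegral_map hd measurable_fst, ← lintegral_map hd measurable_snd, Measure.map_fst_prod, Measure.map_snd_prod,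
        lintegral_smul_measure, lintegral_smul_measure, smul_eq_mul, smul_eq_mul]

/-- The coupling is `q₀` plus the normalised product of the two remainders. -/
theorem W1_le_of_map_le {μ ν : Measure X} [IsFiniteMeasure μ] [IsFiniteMeasure ν]
    (hμν : μ univ = ν univ) {q₀ : Measure (X × X)} [IsFiniteMeasure q₀]
    (h₁ : q₀.map Prod.fst ≤ μ) (h₂ : q₀.map Prod.snd ≤ ν) (x₀ : X) :
    W1 μ ν ≤ ∫⁻ p, edist p.1 p.2 ∂q₀ +
      (∫⁻ x, edist x x₀ ∂(μ - q₀.map Prod.fst) + ∫⁻ x, edist x x₀ ∂(ν - q₀.map Prod.snd)) := by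
  set μ₁ := μ - q₀.map Prod.fst
  set ν₁ := ν - q₀.map Prod.snd
  have hmass : ν₁ univ = μ₁ univ := by
    simp only [μ₁, ν₁, Measure.sub_apply MeasurableSet.univ h₁,
      Measure.sub_apply MeasurableSet.univ h₂, Measure.map_apply measurable_fst MeasurableSet.univ,
      Measure.map_apply measurable_snd MeasurableSet.univ, preimage_univ, hμν]
  have hfst : (q₀ + (μ₁ univ)⁻¹ • μ₁.prod ν₁).map Prod.fst = μ := by
    rw [Measure.map_add _ _ measurable_fst, Measure.map_smul, Measure.map_fst_prod, hmass,
      Measure.inv_smul_smul_measure_univ, add_comm, Measure.sub_add_cancel_of_le h₁]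
  have hsnd : (q₀ + (μ₁ univ)⁻¹ • μ₁.prod ν₁).map Prod.snd = ν := by
    rw [Measure.map_add _ _ measurable_snd, Measure.map_smul, Measure.map_snd_prod, ← hmass,
      Measure.inv_smul_smul_measure_univ, add_comm, Measure.sub_add_cancel_of_le h₂]
  refine (W1_le_lintegral hfst hsnd).trans ?_
  rw [lintegral_add_measure, lintegral_smul_measure, smul_eq_mul]
  gcongr
  calc (μ₁ univ)⁻¹ * ∫⁻ p, edist p.1 p.2 ∂μ₁.prod ν₁
      ≤ (μ₁ univ)⁻¹ * (μ₁ univ * (∫⁻ x, edist x x₀ ∂μ₁ + ∫⁻ y, edist y x₀ ∂ν₁)) := by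
        gcongr
        exact (lintegral_edist_prod_le μ₁ ν₁ x₀).trans_eq (by rw [hmass, mul_add])
    _ ≤ ∫⁻ x, edist x x₀ ∂μ₁ + ∫⁻ y, edist y x₀ ∂ν₁ := by
        rw [← mul_assoc]
        exact mul_le_of_le_one_left (by positivity) (ENNReal.inv_mul_le_one _)

theorem lintegral_edist_le_of_le {ρ ρ' : Measure X} (h : ρ ≤ ρ') (x₀ : X) (R : ℝ≥0∞) :
    ∫⁻ x, edist x x₀ ∂ρ ≤ R * ρ univ + (∫⁻ x, edist x x₀ ^ 2 ∂ρ') / R := by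
  have hd : Measurable fun x => edist x x₀ ^ 2 :=
    (continuous_id.edist continuous_const).measurable.pow_const 2
  calc ∫⁻ x, edist x x₀ ∂ρ ≤ ∫⁻ x, R + edist x x₀ ^ 2 / R ∂ρ :=
        lintegral_mono fun x => ENNReal.le_add_sq_div _ _
    _ = R * ρ univ + (∫⁻ x, edist x x₀ ^ 2 ∂ρ) / R := by
        simp_rw [div_eq_mul_inv]
        rw [lintegral_add_left measurable_const, lintegral_const, mul_comm,
          lintegral_mul_const _ hd]
    _ ≤ R * ρ univ + (∫⁻ x, edist x x₀ ^ 2 ∂ρ') / R := by gcongr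

theorem W1_le_of_pairwiseDisjoint {ι : Type*} {μ ν : Measure X} [IsProbabilityMeasure μ]
    [IsProbabilityMeasure ν] {s : Finset ι} {A : ι → Set X} (hA : ∀ k, MeasurableSet (A k))
    (hd : (s : Set ι).PairwiseDisjoint A) {ε : ℝ≥0∞} (hε : ∀ k ∈ s, ediam (A k) ≤ ε)
    (x₀ : X) (R : ℝ≥0∞) :
    W1 μ ν ≤ ε + 2 * R * (1 - ∑ k ∈ s, min (μ (A k)) (ν (A k))) +
      (∫⁻ x, edist x x₀ ^ 2 ∂μ + ∫⁻ x, edist x x₀ ^ 2 ∂ν) / R := by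
  set S := ∑ k ∈ s, min (μ (A k)) (ν (A k))
  set q₀ := ∑ k ∈ s, overlapProd μ ν (A k)
  have h₁ : q₀.map Prod.fst ≤ μ := map_fst_sum_overlapProd_le μ ν hA hd
  have h₂ : q₀.map Prod.snd ≤ ν := map_snd_sum_overlapProd_le μ ν hA hd
  have hmass : q₀ univ = S := by
    simp only [q₀, S, Measure.coe_finsetSum, Finset.sum_apply, overlapProd_apply_univ]
  have hS : S ≤ 1 := by
    simpa [hmass, Measure.map_apply measurable_fst MeasurableSet.univ] using h₁ univ
  have : IsFiniteMeasure q₀ := ⟨by rw [hmass]; exact hS.trans_lt ENNReal.one_lt_top⟩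
  have hrest : ∀ (ρ : Measure X) [IsProbabilityMeasure ρ] (f : X × X → X) (hf : Measurable f),
      q₀.map f ≤ ρ → (ρ - q₀.map f) univ = 1 - S := fun ρ _ f hf h => by
    rw [Measure.sub_apply MeasurableSet.univ h, Measure.map_apply hf MeasurableSet.univ,
      preimage_univ, measure_univ, hmass]
  calc W1 μ ν ≤ ∫⁻ p, edist p.1 p.2 ∂q₀ +
        (∫⁻ x, edist x x₀ ∂(μ - q₀.map Prod.fst) + ∫⁻ x, edist x x₀ ∂(ν - q₀.map Prod.snd)) :=
        W1_le_of_map_le (by simp) h₁ h₂ x₀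
    _ ≤ ε + ((R * (1 - S) + (∫⁻ x, edist x x₀ ^ 2 ∂μ) / R) +
          (R * (1 - S) + (∫⁻ x, edist x x₀ ^ 2 ∂ν) / R)) := by
        gcongr
        · calc ∫⁻ p, edist p.1 p.2 ∂q₀ ≤ ∑ k ∈ s, ε * min (μ (A k)) (ν (A k)) := by
                rw [lintegral_finsetSum_measure]
                exact Finset.sum_le_sum fun k hk =>
                  lintegral_edist_overlapProd_le μ ν (hA k) (hε k hk)
            _ ≤ ε := by rw [← Finset.mul_sum]; exact mul_le_of_le_one_right (by positivity) hS
        · rw [← hrest μ Prod.fst measurable_fst h₁]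
          exact lintegral_edist_le_of_le Measure.sub_le x₀ R
        · rw [← hrest ν Prod.snd measurable_snd h₂]
          exact lintegral_edist_le_of_le Measure.sub_le x₀ R
    _ = ε + 2 * R * (1 - S) + (∫⁻ x, edist x x₀ ^ 2 ∂μ + ∫⁻ x, edist x x₀ ^ 2 ∂ν) / R := by
        rw [ENNReal.add_div]; ring

end Glue

section SecondMoment

variable {X : Type*} [MetricSpace X] [MeasurableSpace X]

theorem lintegral_edist_sq_mul_measure_le (ρ : Measure X) [IsProbabilityMeasure ρ] {B : Set X}
    (hB : MeasurableSet B) {x₀ : X} {N : ℝ≥0∞} (hN : ∀ y ∈ B, edist y x₀ ≤ N) :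
    (∫⁻ x, edist x x₀ ^ 2 ∂ρ) * ρ B ≤ 2 * Var ρ ρ + 2 * N ^ 2 := by
  have hsq : ∀ x, ∀ y ∈ B, edist x x₀ ^ 2 ≤ 2 * (edist x y ^ 2 + N ^ 2) := fun x y hy =>
    calc edist x x₀ ^ 2 ≤ (edist x y + N) ^ 2 := by
          gcongr; exact (edist_triangle x y x₀).trans (by gcongr; exact hN y hy)
      _ ≤ 2 * (edist x y ^ 2 + N ^ 2) := ENNReal.add_sq_le _ _
  calc (∫⁻ x, edist x x₀ ^ 2 ∂ρ) * ρ B = ∫⁻ x, ∫⁻ _ in B, edist x x₀ ^ 2 ∂ρ ∂ρ := by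
        simp only [setLIntegral_const]
        exact (lintegral_mul_const' _ _ (measure_ne_top _ _)).symm
    _ ≤ ∫⁻ x, ∫⁻ y, 2 * (edist x y ^ 2 + N ^ 2) ∂ρ ∂ρ := lintegral_mono fun x =>
        (setLIntegral_mono' hB (hsq x)).trans (setLIntegral_le_lintegral _ _)
    _ = 2 * Var ρ ρ + 2 * N ^ 2 := by
        simp only [mul_add, lintegral_add_right _ measurable_const, lintegral_const, measure_univ,
          mul_one, lintegral_const_mul' _ _ ENNReal.ofNat_ne_top, Var]

variable [OpensMeasurableSpace X]

theorem exists_lintegral_edist_sq_le {μ : ℕ → Measure X} {ν : Measure X}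
    [∀ i, IsProbabilityMeasure (μ i)] [IsProbabilityMeasure ν]
    (hopen : ∀ G, IsOpen G → ν G ≤ atTop.liminf fun i => μ i G) {C : ℝ≥0∞} (hC : C ≠ ∞)
    (hvar : ∀ i, Var (μ i) (μ i) ≤ C) (x₀ : X) :
    ∃ M ≠ ∞, (∀ᶠ i in atTop, ∫⁻ x, edist x x₀ ^ 2 ∂μ i ≤ M) ∧ ∫⁻ x, edist x x₀ ^ 2 ∂ν ≤ M := by
  obtain ⟨N, hN⟩ : ∃ N : ℕ, 2⁻¹ < ν (ball x₀ N) := by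
    have h := tendsto_measure_iUnion_atTop (μ := ν)
      (fun _ _ h => ball_subset_ball (by exact_mod_cast h) : Monotone fun N : ℕ => ball x₀ N)
    rw [iUnion_ball_nat, measure_univ] at h
    exact (h.eventually_const_lt (ENNReal.inv_lt_one.2 ENNReal.one_lt_two)).exists
  have hball : ∀ y ∈ ball x₀ N, edist y x₀ ≤ ENNReal.ofReal N := fun y hy =>
    (edist_le_ofReal N.cast_nonneg).2 (mem_ball.1 hy).le
  refine ⟨(2 * C + 2 * ENNReal.ofReal N ^ 2) * 2, by finiteness, ?_⟩
  have hμ : ∀ᶠ i in atTop, ∫⁻ x, edist x x₀ ^ 2 ∂μ i ≤ (2 * C + 2 * ENNReal.ofReal N ^ 2) * 2 := by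
    filter_upwards [eventually_lt_of_lt_liminf (hN.trans_le (hopen _ isOpen_ball))] with i hi
    calc ∫⁻ x, edist x x₀ ^ 2 ∂μ i = (∫⁻ x, edist x x₀ ^ 2 ∂μ i) * 2⁻¹ * 2 := by
          rw [mul_assoc, ENNReal.inv_mul_cancel two_ne_zero ENNReal.ofNat_ne_top, mul_one]
      _ ≤ (2 * C + 2 * ENNReal.ofReal N ^ 2) * 2 := by
          gcongr
          calc (∫⁻ x, edist x x₀ ^ 2 ∂μ i) * 2⁻¹
              ≤ (∫⁻ x, edist x x₀ ^ 2 ∂μ i) * μ i (ball x₀ N) := by gcongr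
            _ ≤ 2 * Var (μ i) (μ i) + 2 * ENNReal.ofReal N ^ 2 :=
                lintegral_edist_sq_mul_measure_le _ measurableSet_ball hball
            _ ≤ 2 * C + 2 * ENNReal.ofReal N ^ 2 := by gcongr; exact hvar i
  refine ⟨hμ, ?_⟩
  have hcont : Continuous fun x => dist x x₀ ^ 2 := (continuous_id.dist continuous_const).pow 2
  have hlsc := lintegral_le_liminf_lintegral_of_forall_isOpen_measure_le_liminf_measure hcont
    (fun _ => sq_nonneg _) hopen
  simp only [edist_dist, ← ENNReal.ofReal_pow dist_nonneg] at hμ ⊢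
  exact hlsc.trans (liminf_le_of_frequently_le' hμ.frequently)

end SecondMoment

section Partition

variable {X : Type*} [MeasurableSpace X]

theorem null_frontier_union [TopologicalSpace X] {μ : Measure X} {s t : Set X}
    (hs : μ (frontier s) = 0) (ht : μ (frontier t) = 0) : μ (frontier (s ∪ t)) = 0 := by
  rw [← frontier_compl, compl_union]
  exact null_frontier_inter (by rwa [frontier_compl]) (by rwa [frontier_compl])

theorem null_frontier_disjointed [TopologicalSpace X] {μ : Measure X} {ι : Type*} [Preorder ι]
    [LocallyFiniteOrderBot ι] {B : ι → Set X} (hB : ∀ k, μ (frontier (B k)) = 0) (k : ι) :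
    μ (frontier (disjointed B k)) = 0 := by
  rw [disjointed_apply, sdiff_eq]
  refine null_frontier_inter (hB k) ?_
  rw [frontier_compl]
  exact Finset.sup_induction (p := fun t => μ (frontier t) = 0) (by simp)
    (fun _ h₁ _ h₂ => null_frontier_union h₁ h₂) fun j _ => hB j

variable [PseudoMetricSpace X] [OpensMeasurableSpace X]

/-- Balls around a dense sequence, with radii chosen so that their spheres are `ν`-null, made
disjoint. -/
theorem exists_partition_ediam_le_null_frontier [Nonempty X] [TopologicalSpace.SeparableSpace X]
    (ν : Measure X) [SFinite ν] {ε : ℝ} (hε : 0 < ε) :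
    ∃ A : ℕ → Set X, (∀ k, MeasurableSet (A k)) ∧ Pairwise (Disjoint on A) ∧
      (∀ k, ediam (A k) ≤ ENNReal.ofReal ε) ∧ ⋃ k, A k = univ ∧ ∀ k, ν (frontier (A k)) = 0 := by
  obtain ⟨y, hy⟩ := TopologicalSpace.exists_dense_seq X
  choose r hr hr₀ using fun j =>
    exists_null_frontier_thickening ν {y j} (by linarith : ε / 4 < ε / 2)
  simp only [thickening_singleton] at hr₀
  refine ⟨disjointed fun j => ball (y j) (r j),
    MeasurableSet.disjointed fun j => measurableSet_ball, disjoint_disjointed _, fun k => ediam_le fun a ha b hb => ?_, ?_, null_frontier_disjointed hr₀⟩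
  · have ha := mem_ball.1 (disjointed_subset _ k ha)
    have hb := mem_ball.1 (disjointed_subset _ k hb)
    rw [edist_le_ofReal hε.le]
    linarith [dist_triangle_right a b (y k), (hr k).2]
  · rw [iUnion_disjointed, eq_univ_iff_forall]
    intro x
    obtain ⟨j, hj⟩ := hy.exists_dist_lt x (by positivity : 0 < ε / 4)
    exact mem_iUnion.2 ⟨j, mem_ball.2 (hj.trans (hr j).1)⟩

theorem exists_eventually_one_sub_sum_min_lt {μ : ℕ → Measure X} {ν : Measure X}
    [∀ i, IsProbabilityMeasure (μ i)] [IsProbabilityMeasure ν]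
    (hopen : ∀ G, IsOpen G → ν G ≤ atTop.liminf fun i => μ i G) {A : ℕ → Set X}
    (hA : ∀ k, MeasurableSet (A k)) (hd : Pairwise (Disjoint on A)) (hcover : ⋃ k, A k = univ)
    (hfr : ∀ k, ν (frontier (A k)) = 0) {δ : ℝ≥0∞} (hδ : 0 < δ) :
    ∃ n, ∀ᶠ i in atTop, 1 - ∑ k ∈ Finset.range n, min (μ i (A k)) (ν (A k)) < δ := by
  have hsum := ENNReal.tendsto_nat_tsum fun k => ν (A k)
  rw [← measure_iUnion hd hA, hcover, measure_univ] at hsum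
  obtain ⟨n, hn⟩ := ((ENNReal.Tendsto.sub tendsto_const_nhds hsum
    (Or.inl ENNReal.one_ne_top)).eventually (gt_mem_nhds (by simpa using hδ))).exists
  refine ⟨n, (ENNReal.Tendsto.sub tendsto_const_nhds (tendsto_finsetSum _ fun k _ =>
    (tendsto_measure_of_null_frontier hopen (hfr k)).min tendsto_const_nhds)
    (Or.inl ENNReal.one_ne_top)).eventually (gt_mem_nhds ?_)⟩
  simpa only [min_self] using hn

end Partition

theorem w1_tendsto_of_weak_tendsto_of_var_le_general {X : Type*} [MetricSpace X]
    [TopologicalSpace.SeparableSpace X] [MeasurableSpace X] [BorelSpace X]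
    (μ : ℕ → Measure X) (μ' : Measure X) [∀ i, IsProbabilityMeasure (μ i)]
    [IsProbabilityMeasure μ']
    (C : ℝ≥0∞) (hC : C ≠ ∞) (hvar : ∀ i, Var (μ i) (μ i) ≤ C)
    (hweak : ∀ f : BoundedContinuousFunction X ℝ,
      Tendsto (fun i => ∫ x, f x ∂(μ i)) atTop (nhds (∫ x, f x ∂μ'))) :
    Tendsto (fun i => W1 (μ i) μ') atTop (nhds 0) := by
  have hopen : ∀ G, IsOpen G → μ' G ≤ atTop.liminf fun i => μ i G := fun _ hG =>
    ProbabilityMeasure.le_liminf_measure_open_of_tendsto (μ := ⟨μ', inferInstance⟩)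
      (μs := fun i => ⟨μ i, inferInstance⟩)
      (ProbabilityMeasure.tendsto_iff_forall_integral_tendsto.2 hweak) hG
  have : Nonempty X := nonempty_of_isProbabilityMeasure μ'
  let x₀ : X := Classical.arbitrary X
  obtain ⟨M, hM, hMμ, hMμ'⟩ := exists_lintegral_edist_sq_le hopen hC hvar x₀
  rw [ENNReal.tendsto_nhds_zero]
  intro a ha
  have ha₃ : 0 < a / 3 := ENNReal.div_pos ha.ne' ENNReal.ofNat_ne_top
  obtain ⟨R, hR⟩ : ∃ R : ℕ, (M + M) / R < a / 3 := by
    have h := ENNReal.Tendsto.const_mul (a := M + M) ENNReal.tendsto_inv_nat_nhds_zero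
      (Or.inr (by finiteness))
    rw [mul_zero] at h
    simpa only [div_eq_mul_inv] using (h.eventually (gt_mem_nhds ha₃)).exists
  obtain ⟨ε, -, hε₀, hε⟩ := ENNReal.lt_iff_exists_real_btwn.1 ha₃
  obtain ⟨A, hAm, hAd, hAε, hAcov, hAfr⟩ :=
    exists_partition_ediam_le_null_frontier μ' (ENNReal.ofReal_pos.1 hε₀)
  obtain ⟨n, hn⟩ := exists_eventually_one_sub_sum_min_lt hopen hAm hAd hAcov hAfr
    (ENNReal.div_pos ha₃.ne' (by finiteness) : 0 < a / 3 / (2 * R))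
  filter_upwards [hMμ, hn] with i hMi hi
  calc W1 (μ i) μ' ≤ ENNReal.ofReal ε +
        2 * R * (1 - ∑ k ∈ Finset.range n, min (μ i (A k)) (μ' (A k))) +
        (∫⁻ x, edist x x₀ ^ 2 ∂μ i + ∫⁻ x, edist x x₀ ^ 2 ∂μ') / R :=
        W1_le_of_pairwiseDisjoint hAm (hAd.set_pairwise _) (fun k _ => hAε k) x₀ R
    _ ≤ a / 3 + a / 3 + a / 3 := by
        refine add_le_add (add_le_add hε.le ?_) ?_
        · exact (mul_le_mul_right hi.le _).trans ENNReal.mul_div_le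
        · exact (ENNReal.div_le_div_right (add_le_add hMi hMμ') _).trans hR.le
    _ = a := ENNReal.add_thirds a

/-- If probability measures `μᵢ` on a complete separable metric space converge weakly to `μ_∞`
(i.e. `∫ f dμᵢ → ∫ f dμ_∞` for all bounded continuous `f`) and have uniformly bounded
variances `Var(μᵢ) ≤ C < ∞`, then `μᵢ → μ_∞` in the 1-Wasserstein distance. -/
theorem w1_tendsto_of_weak_tendsto_of_var_le {X : Type*} [MetricSpace X] [CompleteSpace X]
    [TopologicalSpace.SeparableSpace X] [MeasurableSpace X] [BorelSpace X]
    (μ : ℕ → Measure X) (μ' : Measure X) [∀ i, IsProbabilityMeasure (μ i)]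
    [IsProbabilityMeasure μ']
    (C : ℝ≥0∞) (hC : C ≠ ∞) (hvar : ∀ i, Var (μ i) (μ i) ≤ C)
    (hweak : ∀ f : BoundedContinuousFunction X ℝ,
      Tendsto (fun i => ∫ x, f x ∂(μ i)) atTop (nhds (∫ x, f x ∂μ'))) :
    Tendsto (fun i => W1 (μ i) μ') atTop (nhds 0) :=
  w1_tendsto_of_weak_tendsto_of_var_le_general μ μ' C hC hvar hweak
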